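/- Let ⟨⟨-,-⟩⟩ be a double bracket on A and ⟨⟨-,-⟩⟩_op the flipped double bracket on the opposite algebra A^op, ⟨⟨a,b⟩⟩_op = ⟨⟨a,b⟩⟩^∘. Identifying A^op with A as a ℂ-vector space and writing τ_(13)(a₁⊗a₂⊗a₃) = a₃⊗a₂⊗a₁, the double Jacobiators of the two brackets satisfy ⟨⟨a,b,c⟩⟩_op = −τ_(13)(⟨⟨b,a,c⟩⟩) for all a,b,c ∈ A. -/
import Mathlib


set_option synthInstance.maxHeartbeats 400000

open TensorProduct

noncomputable section

namespace Stmt2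

variable {A : Type*} [Ring A] [Algebra ℂ A]

/-- The flip `(c ⊗ d)^∘ = d ⊗ c` on `A ⊗[ℂ] A`. -/
def flipT : A ⊗[ℂ] A →ₗ[ℂ] A ⊗[ℂ] A := (TensorProduct.comm ℂ A A).toLinearMap

/-- The outer bimodule structure `a ⬝ (d' ⊗ d'') ⬝ b = (a d') ⊗ (d'' b)`. -/
def outerAct (a b : A) : A ⊗[ℂ] A →ₗ[ℂ] A ⊗[ℂ] A :=
  TensorProduct.map (LinearMap.mulLeft ℂ a) (LinearMap.mulRight ℂ b)

/-- The inner bimodule structure `a ∗ (d' ⊗ d'') ∗ b = (d' b) ⊗ (a d'')`. -/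
def innerAct (a b : A) : A ⊗[ℂ] A →ₗ[ℂ] A ⊗[ℂ] A :=
  TensorProduct.map (LinearMap.mulRight ℂ b) (LinearMap.mulLeft ℂ a)

/-- Axioms of a double bracket on `A`. -/
structure IsDoubleBracket (br : A →ₗ[ℂ] A →ₗ[ℂ] A ⊗[ℂ] A) : Prop where
  cyclic : ∀ a b : A, br a b = - flipT (br b a)
  right_der : ∀ a b c : A, br a (b * c) = outerAct 1 c (br a b) + outerAct b 1 (br a c)
  left_der : ∀ a b c : A, br (b * c) a = innerAct 1 c (br b a) + innerAct b 1 (br c a)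

/-- `τ₍₁₂₃₎ : (a₁ ⊗ a₂) ⊗ a₃ ↦ (a₃ ⊗ a₁) ⊗ a₂`. -/
def cyc3 : (A ⊗[ℂ] A) ⊗[ℂ] A →ₗ[ℂ] (A ⊗[ℂ] A) ⊗[ℂ] A :=
  ((TensorProduct.comm ℂ (A ⊗[ℂ] A) A).trans (TensorProduct.assoc ℂ A A A).symm).toLinearMap

/-- `τ₍₁₃₎ : (a₁ ⊗ a₂) ⊗ a₃ ↦ (a₃ ⊗ a₂) ⊗ a₁`. -/
def tau13 : (A ⊗[ℂ] A) ⊗[ℂ] A →ₗ[ℂ] (A ⊗[ℂ] A) ⊗[ℂ] A :=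
  cyc3 ∘ₗ TensorProduct.map flipT LinearMap.id

/-- The left extension of a double bracket. -/
def brL (br : A →ₗ[ℂ] A →ₗ[ℂ] A ⊗[ℂ] A) (a : A) :
    A ⊗[ℂ] A →ₗ[ℂ] (A ⊗[ℂ] A) ⊗[ℂ] A :=
  TensorProduct.map (br a) LinearMap.id

/-- The double Jacobiator of a double bracket. -/
def tripleBr (br : A →ₗ[ℂ] A →ₗ[ℂ] A ⊗[ℂ] A) (a b c : A) : (A ⊗[ℂ] A) ⊗[ℂ] A :=
  brL br a (br b c) + cyc3 (brL br b (br c a)) + cyc3 (cyc3 (brL br c (br a b)))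

/-- The flipped double bracket `⟨⟨a,b⟩⟩_op := ⟨⟨a,b⟩⟩^∘` on the opposite algebra. -/
def opBr (br : A →ₗ[ℂ] A →ₗ[ℂ] A ⊗[ℂ] A) :
    Aᵐᵒᵖ →ₗ[ℂ] Aᵐᵒᵖ →ₗ[ℂ] Aᵐᵒᵖ ⊗[ℂ] Aᵐᵒᵖ :=
  (br.compl₁₂ (MulOpposite.opLinearEquiv ℂ).symm.toLinearMap
      (MulOpposite.opLinearEquiv ℂ).symm.toLinearMap).compr₂
    ((TensorProduct.map (MulOpposite.opLinearEquiv ℂ).toLinearMap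
        (MulOpposite.opLinearEquiv ℂ).toLinearMap).comp
      (TensorProduct.comm ℂ A A).toLinearMap)

/-- Identification of `(A ⊗ A) ⊗ A` with `(Aᵐᵒᵖ ⊗ Aᵐᵒᵖ) ⊗ Aᵐᵒᵖ` as vector spaces. -/
def opT3 : (A ⊗[ℂ] A) ⊗[ℂ] A →ₗ[ℂ] (Aᵐᵒᵖ ⊗[ℂ] Aᵐᵒᵖ) ⊗[ℂ] Aᵐᵒᵖ :=
  TensorProduct.map
    (TensorProduct.map (MulOpposite.opLinearEquiv ℂ).toLinearMap
      (MulOpposite.opLinearEquiv ℂ).toLinearMap)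
    (MulOpposite.opLinearEquiv ℂ).toLinearMap

-- auxiliary

def opT2 : A ⊗[ℂ] A →ₗ[ℂ] Aᵐᵒᵖ ⊗[ℂ] Aᵐᵒᵖ :=
  TensorProduct.map (MulOpposite.opLinearEquiv ℂ).toLinearMap
    (MulOpposite.opLinearEquiv ℂ).toLinearMap

lemma opBr_apply (br : A →ₗ[ℂ] A →ₗ[ℂ] A ⊗[ℂ] A) (x y : A) :
    opBr br (MulOpposite.op x) (MulOpposite.op y) = opT2 (flipT (br x y)) := rfl

lemma flipT_flipT (t : A ⊗[ℂ] A) : flipT (flipT t) = t := by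
  induction t using TensorProduct.induction_on with
  | zero => simp
  | tmul p q => simp [flipT]
  | add x y hx hy => simp [map_add, hx, hy]

lemma flipT_br (br : A →ₗ[ℂ] A →ₗ[ℂ] A ⊗[ℂ] A) (hbr : IsDoubleBracket br) (x y : A) :
    flipT (br x y) = - br y x := by
  rw [hbr.cyclic y x, neg_neg]

lemma key0 (s : A ⊗[ℂ] A) (u : A) :
    (opT2 (flipT s)) ⊗ₜ[ℂ] (MulOpposite.op u) = opT3 (tau13 (cyc3 (s ⊗ₜ[ℂ] u))) := by
  induction s using TensorProduct.induction_on with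
  | zero => simp only [map_zero, zero_tmul]
  | tmul p q =>
      simp [opT2, opT3, flipT, cyc3, tau13, TensorProduct.assoc_symm_tmul]
  | add x y hx hy => simp [map_add, add_tmul, hx, hy]

lemma key1 (br : A →ₗ[ℂ] A →ₗ[ℂ] A ⊗[ℂ] A) (x : A) (t : A ⊗[ℂ] A) :
    brL (opBr br) (MulOpposite.op x) (opT2 t) = opT3 (tau13 (cyc3 (brL br x t))) := by
  induction t using TensorProduct.induction_on with
  | zero => simp only [map_zero]
  | tmul p q =>
      have : brL (opBr br) (MulOpposite.op x) (opT2 (p ⊗ₜ[ℂ] q))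
          = (opT2 (flipT (br x p))) ⊗ₜ[ℂ] (MulOpposite.op q) := rfl
      rw [this, key0]
      rfl
  | add u v hu hv => simp [map_add, hu, hv]

lemma key2a :
    (cyc3 ∘ₗ opT3 ∘ₗ tau13 ∘ₗ cyc3 : (A ⊗[ℂ] A) ⊗[ℂ] A →ₗ[ℂ] _)
      = opT3 ∘ₗ tau13 := by
  ext p q r
  simp [cyc3, tau13, opT3, flipT, TensorProduct.assoc_symm_tmul]

lemma key2b :
    (cyc3 ∘ₗ cyc3 ∘ₗ opT3 ∘ₗ tau13 ∘ₗ cyc3 : (A ⊗[ℂ] A) ⊗[ℂ] A →ₗ[ℂ] _)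
      = opT3 ∘ₗ tau13 ∘ₗ cyc3 ∘ₗ cyc3 := by
  ext p q r
  simp [cyc3, tau13, opT3, flipT, TensorProduct.assoc_symm_tmul]

/-- The double Jacobiators of a double bracket and of its flip on the
opposite algebra satisfy `⟨⟨a,b,c⟩⟩_op = −τ₍₁₃₎(⟨⟨b,a,c⟩⟩)`. -/
theorem tripleBr_opposite
    (br : A →ₗ[ℂ] A →ₗ[ℂ] A ⊗[ℂ] A) (hbr : IsDoubleBracket br) (a b c : A) :
    tripleBr (opBr br) (MulOpposite.op a) (MulOpposite.op b) (MulOpposite.op c)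
      = - opT3 (tau13 (tripleBr br b a c)) := by
  have h1 : brL (opBr br) (MulOpposite.op a) (opBr br (MulOpposite.op b) (MulOpposite.op c))
      = - opT3 (tau13 (cyc3 (brL br a (br c b)))) := by
    rw [opBr_apply, key1, flipT_br br hbr b c, map_neg, map_neg, map_neg, map_neg]
  have h2 : cyc3 (brL (opBr br) (MulOpposite.op b) (opBr br (MulOpposite.op c) (MulOpposite.op a)))
      = - opT3 (tau13 (brL br b (br a c))) := by
    rw [opBr_apply, key1, flipT_br br hbr c a, map_neg, map_neg, map_neg, map_neg, map_neg]
    congr 1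
    exact LinearMap.congr_fun key2a _
  have h3 : cyc3 (cyc3 (brL (opBr br) (MulOpposite.op c) (opBr br (MulOpposite.op a) (MulOpposite.op b))))
      = - opT3 (tau13 (cyc3 (cyc3 (brL br c (br b a))))) := by
    rw [opBr_apply, key1, flipT_br br hbr a b, map_neg, map_neg, map_neg, map_neg, map_neg, map_neg]
    congr 1
    exact LinearMap.congr_fun key2b _
  rw [tripleBr, h1, h2, h3, tripleBr]
  simp only [map_add, map_neg]
  abel

end Stmt2
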